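/- For the coefficients of the recurrence Δ(n) = a(n)·Δ(n−1) + β(n)/n (where Δ(n) = e − B(n)): a(2) = 0, and for every integer n ≥ 3 one has 0 < a(n) < 1/2 and 0 < β(n) < 1; moreover a(n) → (e−2)/(e−1) and β(n) → e/(2(e−1)) as n → ∞. -/

import Mathlib

/-!
Write `p = (1 - 1/n)^(n-1)` and `D = 1 - (1 - 1/n)^n - (1/n)^n`, so that `a(n) = 1 - p/D` and
`β(n) = n (e p - 1)/D`. With `m = n - 1` one has `e p = exp (1 - m log (1 + 1/m))`, and the series
`log (1 + 1/m) = 2 artanh (1/(2m+1))` squeezes the exponent between `1/(2n)` and `1/(2n-1)`.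
Hence `1 + 1/(2n) ≤ e p < (4n-1)/(4n-3)`: this gives `1/2 ≤ n (e p - 1) < 2n/(4n-3)`, so
`n (e p - 1) → 1/2`, and it pins `p` close enough to `1/e` for all the inequalities. The limits
then follow from `(1 - 1/n)^n → 1/e` and `(1/n)^n → 0`.
-/

open Filter Topology Real

lemma one_sub_mul_log_one_add_inv_bounds {m : ℝ} (hm : 0 < m) :
    1 / (2 * (m + 1)) ≤ 1 - m * log (1 + m⁻¹) ∧ 1 - m * log (1 + m⁻¹) < 1 / (2 * m + 1) := by
  set x := 1 / (2 * m + 1) with hx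
  have hx0 : 0 < x := by positivity
  have hx1 : x < 1 := by rw [hx, div_lt_one (by positivity)]; linarith
  have hmx : 2 * m * x = 1 - x := by rw [hx]; field_simp; ring
  have hratio : (1 + x) / (1 - x) = 1 + m⁻¹ := by rw [hx]; field_simp; ring
  have hlow := sum_range_le_log_div hx0.le hx1 2
  have hup := log_div_le_sum_range_add hx0.le hx1 1
  norm_num [Finset.sum_range_succ, hratio] at hlow hup
  constructor
  · have hsq : 0 < 1 - x ^ 2 := by nlinarith
    have : m * log (1 + m⁻¹) ≤ 1 / (1 + x) := by
      calc m * log (1 + m⁻¹) ≤ 2 * m * (x + x ^ 3 / (1 - x ^ 2)) := by nlinarith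
        _ = 2 * m * x * (1 + x ^ 2 / (1 - x ^ 2)) := by ring
        _ = 1 / (1 + x) := by rw [hmx]; field_simp; ring
    have h2 : 1 / (2 * (m + 1)) = 1 - 1 / (1 + x) := by rw [hx]; field_simp; ring
    linarith
  · have : 1 - x < m * log (1 + m⁻¹) := by
      calc 1 - x < 2 * m * x * (1 + x ^ 2 / 3) := by rw [hmx]; nlinarith
        _ = 2 * m * (x + x ^ 3 / 3) := by ring
        _ ≤ m * log (1 + m⁻¹) := by nlinarith
    linarith

noncomputable def coeffDenom (n : ℕ) : ℝ := 1 - (1 - 1 / (n : ℝ)) ^ n - (1 / (n : ℝ)) ^ n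

section

variable {n : ℕ}

lemma one_sub_one_div_pow_eq_mul (hn : n ≠ 0) :
    (1 - 1 / (n : ℝ)) ^ n = (1 - 1 / (n : ℝ)) * (1 - 1 / (n : ℝ)) ^ (n - 1) :=
  (mul_pow_sub_one hn _).symm

lemma one_sub_one_div_pos (hn : 2 ≤ n) : 0 < 1 - 1 / (n : ℝ) :=
  sub_pos.2 ((div_lt_one (by exact_mod_cast (by omega : 0 < n))).2 (by exact_mod_cast hn))

lemma exp_one_mul_one_sub_one_div_pow_pred_eq (hn : 2 ≤ n) :
    exp 1 * (1 - 1 / (n : ℝ)) ^ (n - 1) =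
      exp (1 - ((n : ℝ) - 1) * log (1 + ((n : ℝ) - 1)⁻¹)) := by
  have hm : (0 : ℝ) < n - 1 := by
    have : (2 : ℝ) ≤ n := by exact_mod_cast hn
    linarith
  have hbase : 1 - 1 / (n : ℝ) = (1 + ((n : ℝ) - 1)⁻¹)⁻¹ := by
    field_simp
    ring
  rw [hbase, ← exp_log (by positivity : 0 < ((1 + ((n : ℝ) - 1)⁻¹)⁻¹) ^ (n - 1)), ← exp_add,
    log_pow, log_inv, Nat.cast_pred (by omega)]
  ring_nf

lemma exp_one_mul_one_sub_one_div_pow_pred_bounds (hn : 2 ≤ n) :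
    1 + 1 / (2 * n) ≤ exp 1 * (1 - 1 / (n : ℝ)) ^ (n - 1) ∧
      exp 1 * (1 - 1 / (n : ℝ)) ^ (n - 1) < (4 * n - 1) / (4 * n - 3) := by
  have hn' : (2 : ℝ) ≤ n := by exact_mod_cast hn
  obtain ⟨hlow, hup⟩ := one_sub_mul_log_one_add_inv_bounds (by linarith : (0 : ℝ) < n - 1)
  rw [sub_add_cancel] at hlow
  rw [show 2 * ((n : ℝ) - 1) + 1 = 2 * n - 1 by ring] at hup
  rw [exp_one_mul_one_sub_one_div_pow_pred_eq hn]
  set y := 1 - ((n : ℝ) - 1) * log (1 + ((n : ℝ) - 1)⁻¹)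
  refine ⟨by linarith [add_one_le_exp y], ?_⟩
  have h2n : (0 : ℝ) < 2 * n - 1 := by linarith
  have hexp := exp_lt_two_add_div_two_sub (div_pos one_pos h2n)
    (by rw [div_lt_iff₀ h2n]; linarith)
  have e1 : 2 + 1 / (2 * (n : ℝ) - 1) = (4 * n - 1) / (2 * n - 1) := by field_simp; ring
  have e2 : 2 - 1 / (2 * (n : ℝ) - 1) = (4 * n - 3) / (2 * n - 1) := by field_simp; ring
  rw [e1, e2, div_div_div_cancel_right₀ h2n.ne'] at hexp
  exact (exp_lt_exp.2 hup).trans hexp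

lemma one_div_pow_self_le (hn : 3 ≤ n) : (1 / (n : ℝ)) ^ n ≤ 1 / (9 * n) := by
  have hn' : (3 : ℝ) ≤ n := by exact_mod_cast hn
  calc (1 / (n : ℝ)) ^ n ≤ (1 / n) ^ 3 :=
        pow_le_pow_of_le_one (by positivity) (by rw [div_le_one (by positivity)]; linarith) hn
    _ ≤ 1 / (9 * n) := by
        rw [div_pow, one_pow, one_div_le_one_div (by positivity) (by positivity)]
        nlinarith [mul_le_mul hn' hn' (by norm_num) (by positivity)]

lemma one_sub_one_div_pow_pred_lt_coeffDenom (hn : 3 ≤ n) :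
    (1 - 1 / (n : ℝ)) ^ (n - 1) < coeffDenom n := by
  have hn' : (3 : ℝ) ≤ n := by exact_mod_cast hn
  have hq : (1 / (n : ℝ)) ^ n ≤ 1 / 27 := (one_div_pow_self_le hn).trans
    (by rw [one_div_le_one_div (by positivity) (by norm_num)]; linarith)
  have hEp := (exp_one_mul_one_sub_one_div_pow_pred_bounds (by omega : 2 ≤ n)).2
  rw [coeffDenom, one_sub_one_div_pow_eq_mul (by omega)]
  set p := (1 - 1 / (n : ℝ)) ^ (n - 1)
  have hEp' : exp 1 * p < 11 / 9 := by
    refine hEp.trans_le ?_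
    rw [div_le_div_iff₀ (by linarith) (by norm_num)]
    linarith
  have hp : p < 9 / 20 := by nlinarith [exp_one_gt_d9]
  have hp0 : 0 < p := pow_pos (one_sub_one_div_pos (by omega)) _
  linarith [mul_nonneg (by positivity : (0 : ℝ) ≤ 1 / n) hp0.le]

lemma coeffDenom_lt_two_mul_one_sub_one_div_pow_pred (hn : 2 ≤ n) :
    coeffDenom n < 2 * (1 - 1 / (n : ℝ)) ^ (n - 1) := by
  have hn' : (2 : ℝ) ≤ n := by exact_mod_cast hn
  have hEp := (exp_one_mul_one_sub_one_div_pow_pred_bounds hn).1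
  rw [coeffDenom, one_sub_one_div_pow_eq_mul (by omega)]
  set p := (1 - 1 / (n : ℝ)) ^ (n - 1)
  have ht : 1 / (n : ℝ) ≤ 1 := by rw [div_le_one (by positivity)]; linarith
  have hEp3 : 3 ≤ exp 1 * (p * (3 - 1 / n)) := by
    rw [← mul_assoc]
    calc (3 : ℝ) ≤ (1 + 1 / (2 * n)) * (3 - 1 / n) := by
          rw [show 1 / (2 * (n : ℝ)) = 1 / n / 2 by ring]
          nlinarith [(by positivity : (0 : ℝ) < 1 / n)]
      _ ≤ exp 1 * p * (3 - 1 / n) := by gcongr; linarith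
  have hp3 : 1 < p * (3 - 1 / n) := by
    by_contra! h
    nlinarith [exp_one_lt_d9, exp_pos 1]
  have hq : 0 ≤ (1 / (n : ℝ)) ^ n := by positivity
  linarith

lemma nat_mul_exp_one_mul_one_sub_one_div_pow_pred_sub_one_lt_coeffDenom (hn : 3 ≤ n) :
    n * (exp 1 * (1 - 1 / (n : ℝ)) ^ (n - 1) - 1) < coeffDenom n := by
  rw [coeffDenom]
  obtain rfl | hn4 := hn.eq_or_lt
  · -- at `n = 3` the upper bound `2n/(4n-3)` of the left-hand side equals `D`, so compute exactly
    norm_num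
    linarith [exp_one_lt_d9]
  have hn' : (4 : ℝ) ≤ n := by exact_mod_cast hn4
  have hq : n * (1 / (n : ℝ)) ^ n ≤ 1 / 9 := by
    have := one_div_pow_self_le hn
    rw [le_div_iff₀ (by positivity)] at this
    linarith
  have hr := (exp_one_mul_one_sub_one_div_pow_pred_bounds (by omega : 2 ≤ n)).2
  rw [lt_div_iff₀ (by linarith)] at hr
  rw [one_sub_one_div_pow_eq_mul (by omega)]
  set p := (1 - 1 / (n : ℝ)) ^ (n - 1)
  set E := exp 1
  have hE : 2.718 < E := by linarith [exp_one_gt_d9]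
  have key : E * ((n : ℝ) ^ 2 * (E * p - 1) + (n - 1) * p) < E * (n - 1 / 9) := by
    have hc : 0 < E * (n : ℝ) ^ 2 + n - 1 := by nlinarith
    have hS : 0 < 18 * (n : ℝ) ^ 2 - 31 * n + 3 := by nlinarith
    refine lt_of_mul_lt_mul_right ?_ (by linarith : (0 : ℝ) ≤ 4 * n - 3)
    nlinarith [mul_lt_mul_of_pos_left hr hc, mul_lt_mul_of_pos_right hE hS]
  have key' := lt_of_mul_lt_mul_left key (by positivity)
  refine lt_of_mul_lt_mul_left ?_ (by positivity : (0 : ℝ) ≤ n)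
  have hexpand : (n : ℝ) * (1 - (1 - 1 / n) * p - (1 / n) ^ n)
      = n - (n - 1) * p - n * (1 / n) ^ n := by
    field_simp
  linarith

lemma coeffDenom_pos (hn : 3 ≤ n) : 0 < coeffDenom n :=
  (pow_pos (one_sub_one_div_pos (by omega)) _).trans (one_sub_one_div_pow_pred_lt_coeffDenom hn)

lemma one_sub_div_coeffDenom_mem (hn : 3 ≤ n) :
    0 < 1 - (1 - 1 / (n : ℝ)) ^ (n - 1) / coeffDenom n ∧
      1 - (1 - 1 / (n : ℝ)) ^ (n - 1) / coeffDenom n < 1 / 2 := by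
  have hpD := one_sub_one_div_pow_pred_lt_coeffDenom hn
  have hD := coeffDenom_pos hn
  have hD2p := coeffDenom_lt_two_mul_one_sub_one_div_pow_pred (by omega : 2 ≤ n)
  constructor
  · linarith [(div_lt_one hD).2 hpD]
  · have : 1 / 2 < (1 - 1 / (n : ℝ)) ^ (n - 1) / coeffDenom n := by
      rw [lt_div_iff₀ hD]
      linarith
    linarith

lemma nat_mul_div_coeffDenom_mem (hn : 3 ≤ n) :
    0 < n * (exp 1 * (1 - 1 / (n : ℝ)) ^ (n - 1) - 1) / coeffDenom n ∧
      n * (exp 1 * (1 - 1 / (n : ℝ)) ^ (n - 1) - 1) / coeffDenom n < 1 := by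
  have hn' : (0 : ℝ) < n := by exact_mod_cast (by omega : 0 < n)
  have hD := coeffDenom_pos hn
  have hEp := (exp_one_mul_one_sub_one_div_pow_pred_bounds (by omega : 2 ≤ n)).1
  refine ⟨div_pos (mul_pos hn' ?_) hD,
    (div_lt_one hD).2 (nat_mul_exp_one_mul_one_sub_one_div_pow_pred_sub_one_lt_coeffDenom hn)⟩
  linarith [(by positivity : (0 : ℝ) < 1 / (2 * n))]

end

lemma tendsto_nat_mul_exp_one_mul_one_sub_one_div_pow_pred_sub_one :
    Tendsto (fun n : ℕ ↦ n * (exp 1 * (1 - 1 / (n : ℝ)) ^ (n - 1) - 1)) atTop (𝓝 (1 / 2)) := by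
  have hupper : Tendsto (fun n : ℕ ↦ 2 / (4 - 3 * (1 / (n : ℝ)))) atTop (𝓝 (1 / 2)) := by
    have := (tendsto_const_nhds (x := (2 : ℝ))).div (tendsto_const_nhds.sub
      (tendsto_one_div_atTop_nhds_zero_nat.const_mul 3)) (by norm_num : (4 : ℝ) - 3 * 0 ≠ 0)
    norm_num at this ⊢
    exact this
  refine tendsto_of_tendsto_of_tendsto_of_le_of_le' tendsto_const_nhds hupper ?_ ?_ <;>
    filter_upwards [eventually_ge_atTop 2] with n hn <;>
    have hn' : (2 : ℝ) ≤ n := by exact_mod_cast hn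
  · have := (exp_one_mul_one_sub_one_div_pow_pred_bounds hn).1
    calc (1 / 2 : ℝ) = n * (1 / (2 * n)) := by field_simp
      _ ≤ _ := by gcongr; linarith
  · have := (exp_one_mul_one_sub_one_div_pow_pred_bounds hn).2
    calc _ ≤ (n : ℝ) * ((4 * n - 1) / (4 * n - 3) - 1) := by gcongr
      _ = 2 / (4 - 3 * (1 / (n : ℝ))) := by
        rw [div_sub_one (by linarith)]
        field_simp
        ring

lemma tendsto_one_sub_one_div_pow_self :
    Tendsto (fun n : ℕ ↦ (1 - 1 / (n : ℝ)) ^ n) atTop (𝓝 (exp (-1))) := by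
  simpa [sub_eq_add_neg, neg_div] using Real.tendsto_one_add_div_pow_exp (-1)

lemma tendsto_one_sub_one_div_pow_pred :
    Tendsto (fun n : ℕ ↦ (1 - 1 / (n : ℝ)) ^ (n - 1)) atTop (𝓝 (exp (-1))) := by
  have h1 : Tendsto (fun n : ℕ ↦ 1 - 1 / (n : ℝ)) atTop (𝓝 1) := by
    simpa using (tendsto_const_nhds (x := (1 : ℝ))).sub tendsto_one_div_atTop_nhds_zero_nat
  refine (div_one (exp (-1)) ▸ tendsto_one_sub_one_div_pow_self.div h1 one_ne_zero).congr' ?_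
  filter_upwards [eventually_ge_atTop 2] with n hn
  simp only [Pi.div_apply]
  rw [one_sub_one_div_pow_eq_mul (by omega), mul_div_cancel_left₀ _ (one_sub_one_div_pos hn).ne']

lemma tendsto_one_div_pow_self : Tendsto (fun n : ℕ ↦ (1 / (n : ℝ)) ^ n) atTop (𝓝 0) := by
  refine tendsto_of_tendsto_of_tendsto_of_le_of_le' tendsto_const_nhds
    tendsto_one_div_atTop_nhds_zero_nat (Eventually.of_forall fun n ↦ by positivity) ?_
  filter_upwards [eventually_ge_atTop 1] with n hn
  exact pow_le_of_le_one (by positivity) (div_le_one_of_le₀ (by exact_mod_cast hn) (by positivity))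
    (by omega)

lemma tendsto_coeffDenom : Tendsto coeffDenom atTop (𝓝 (1 - exp (-1))) := by
  have := ((tendsto_const_nhds (x := (1 : ℝ))).sub tendsto_one_sub_one_div_pow_self).sub
    tendsto_one_div_pow_self
  rwa [sub_zero] at this

lemma one_sub_exp_neg_one_ne_zero : 1 - exp (-1) ≠ 0 :=
  (sub_pos.2 (exp_lt_one_iff.2 (by norm_num))).ne'

lemma tendsto_one_sub_div_coeffDenom :
    Tendsto (fun n : ℕ ↦ 1 - (1 - 1 / (n : ℝ)) ^ (n - 1) / coeffDenom n) atTop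
      (𝓝 ((exp 1 - 2) / (exp 1 - 1))) := by
  have hval : (exp 1 - 2) / (exp 1 - 1) = 1 - exp (-1) / (1 - exp (-1)) := by
    have : exp 1 - 1 ≠ 0 := (sub_pos.2 (one_lt_exp_iff.2 one_pos)).ne'
    rw [exp_neg]
    field_simp
    ring
  rw [hval]
  exact tendsto_const_nhds.sub
    (tendsto_one_sub_one_div_pow_pred.div tendsto_coeffDenom one_sub_exp_neg_one_ne_zero)

lemma tendsto_nat_mul_div_coeffDenom :
    Tendsto (fun n : ℕ ↦ n * (exp 1 * (1 - 1 / (n : ℝ)) ^ (n - 1) - 1) / coeffDenom n) atTop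
      (𝓝 (exp 1 / (2 * (exp 1 - 1)))) := by
  have hval : exp 1 / (2 * (exp 1 - 1)) = 1 / 2 / (1 - exp (-1)) := by
    have : exp 1 - 1 ≠ 0 := (sub_pos.2 (one_lt_exp_iff.2 one_pos)).ne'
    rw [exp_neg]
    field_simp
  rw [hval]
  exact tendsto_nat_mul_exp_one_mul_one_sub_one_div_pow_pred_sub_one.div tendsto_coeffDenom
    one_sub_exp_neg_one_ne_zero

/-- properties of the coefficients a(n), β(n) of the recurrence
    Δ(n) = a(n)·Δ(n−1) + β(n)/n. -/
theorem coeffs_a_beta_properties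
    (a β : ℕ → ℝ)
    (ha : ∀ n : ℕ, 2 ≤ n →
      a n = 1 - (1 - 1/(n:ℝ))^(n-1) / (1 - (1 - 1/(n:ℝ))^n - (1/(n:ℝ))^n))
    (hβ : ∀ n : ℕ, 2 ≤ n →
      β n = (n:ℝ) * (Real.exp 1 * (1 - 1/(n:ℝ))^(n-1) - 1) /
        (1 - (1 - 1/(n:ℝ))^n - (1/(n:ℝ))^n)) :
    a 2 = 0 ∧
    (∀ n : ℕ, 3 ≤ n → 0 < a n ∧ a n < 1/2 ∧ 0 < β n ∧ β n < 1) ∧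
    Tendsto a atTop (𝓝 ((Real.exp 1 - 2) / (Real.exp 1 - 1))) ∧
    Tendsto β atTop (𝓝 (Real.exp 1 / (2 * (Real.exp 1 - 1)))) := by
  have ha' : ∀ n, 2 ≤ n → a n = 1 - (1 - 1 / (n : ℝ)) ^ (n - 1) / coeffDenom n := ha
  have hβ' : ∀ n, 2 ≤ n →
      β n = n * (exp 1 * (1 - 1 / (n : ℝ)) ^ (n - 1) - 1) / coeffDenom n := hβ
  refine ⟨by norm_num [ha 2 le_rfl], fun n hn ↦ ?_,
    tendsto_one_sub_div_coeffDenom.congr' ?_, tendsto_nat_mul_div_coeffDenom.congr' ?_⟩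
  · rw [ha' n (by omega), hβ' n (by omega)]
    exact ⟨(one_sub_div_coeffDenom_mem hn).1, (one_sub_div_coeffDenom_mem hn).2,
      (nat_mul_div_coeffDenom_mem hn).1, (nat_mul_div_coeffDenom_mem hn).2⟩
  · filter_upwards [eventually_ge_atTop 2] with n hn using (ha' n hn).symm
  · filter_upwards [eventually_ge_atTop 2] with n hn using (hβ' n hn).symm
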